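/- arXiv:2212.01299 — 6 statements merged into one kernel-verified Lean document; each statement's English description precedes it below -/
import Mathlib

section
/- For each integer j ≥ 5, the set of congruence classes consisting of 2^{i-1} mod 2^i for i = 1, ..., j-3, together with the three classes (k mod 3) ∩ (0 mod 2^{j-5+k}) for k = 0, 1, 2 (each intersection being a single congruence class modulo 3·2^{j-5+k}), covers the integers: every integer lies in at least one of these classes. -/
/-!
An integer `n` with 2-adic valuation `v < j - 3` lies in the class `2^v mod 2^(v+1)`. Otherwise
`2^(j-3)` divides `n`, hence so does `2^(j-5+k)` for the residue `k ≤ 2` of `n` mod 3.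
-/

lemma Int.two_pow_succ_dvd_or_modEq_of_two_pow_dvd {m : ℕ} {n : ℤ} (h : (2 : ℤ) ^ m ∣ n) :
    (2 : ℤ) ^ (m + 1) ∣ n ∨ n ≡ 2 ^ m [ZMOD 2 ^ (m + 1)] := by
  obtain ⟨q, rfl⟩ := h
  rcases Int.even_or_odd' q with ⟨t, rfl | rfl⟩
  · exact Or.inl ⟨t, by ring⟩
  · exact Or.inr <| Int.modEq_iff_dvd.mpr ⟨-t, by ring⟩

lemma Int.two_pow_dvd_or_exists_modEq_two_pow_pred (m : ℕ) (n : ℤ) :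
    (2 : ℤ) ^ m ∣ n ∨ ∃ i : ℕ, 1 ≤ i ∧ i ≤ m ∧ n ≡ 2 ^ (i - 1) [ZMOD 2 ^ i] := by
  induction m with
  | zero => exact Or.inl (by simp)
  | succ m ih =>
    rcases ih with hdvd | ⟨i, hi1, him, hmod⟩
    · rcases Int.two_pow_succ_dvd_or_modEq_of_two_pow_dvd hdvd with hdvd' | hmod
      · exact Or.inl hdvd'
      · exact Or.inr ⟨m + 1, by omega, le_rfl, hmod⟩
    · exact Or.inr ⟨i, hi1, by omega, hmod⟩

lemma Int.exists_natCast_lt_modEq (n : ℤ) {m : ℕ} (hm : 0 < m) :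
    ∃ k : ℕ, k < m ∧ n ≡ k [ZMOD m] := by
  have hm' : (0 : ℤ) < m := by exact_mod_cast hm
  have hnonneg := Int.emod_nonneg n hm'.ne'
  refine ⟨(n % m).toNat, by have := Int.emod_lt_of_pos n hm'; omega, ?_⟩
  rw [Int.toNat_of_nonneg hnonneg]
  exact (Int.mod_modEq n m).symm

/-- For each `j ≥ 5`, the congruence classes `2^(i-1) mod 2^i` for `i = 1, ..., j-3`,
together with the three classes `(k mod 3) ∩ (0 mod 2^(j-5+k))` for `k = 0, 1, 2`,
cover the integers. -/
theorem stmt0 (j : ℕ) (hj : 5 ≤ j) (n : ℤ) :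
    (∃ i : ℕ, 1 ≤ i ∧ i ≤ j - 3 ∧ n ≡ 2 ^ (i - 1) [ZMOD 2 ^ i]) ∨
    (∃ k : ℕ, k ≤ 2 ∧ n ≡ (k : ℤ) [ZMOD 3] ∧ n ≡ 0 [ZMOD 2 ^ (j - 5 + k)]) := by
  refine (Int.two_pow_dvd_or_exists_modEq_two_pow_pred (j - 3) n).symm.imp_right fun hdvd => ?_
  obtain ⟨k, hk, hmod⟩ := Int.exists_natCast_lt_modEq n (m := 3) (by norm_num)
  refine ⟨k, by omega, hmod, Int.modEq_zero_iff_dvd.mpr ?_⟩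
  exact (pow_dvd_pow 2 (by omega)).trans hdvd
end

section
/- For each integer j ≥ 5, the covering system consisting of 2^{i-1} mod 2^i for i = 1, ..., j-3, together with the classes A_k = (k mod 3) ∩ (0 mod 2^{j-5+k}) for k = 0, 1, 2, is minimal: no proper subset of these congruence classes covers ℤ. -/
/-!
Every class of the system contains a point lying in no other class, so dropping any class
uncovers that point. In `2^(i-1) mod 2^i` take `2^(i-1) (2^i + 3)`: its 2-adic valuation is
exactly `i - 1`, which singles out `i` among the dyadic classes and rules out `A_2`, and it is
`≡ 2 mod 3`, which rules out `A_0` and `A_1`. In `A_k` take `k · 4^j`: it is divisible by every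
modulus `2^i` of a dyadic class, and its residue `k mod 3` singles out `A_k`.
-/

theorem Set.sUnion_ne_univ_of_ssubset {α : Type*} {C T : Set (Set α)}
    (hC : ∀ S ∈ C, ∃ x, ∀ S' ∈ C, x ∈ S' → S' = S) (hT : T ⊂ C) : ⋃₀ T ≠ Set.univ := by
  intro hcov
  obtain ⟨S, hSC, hST⟩ := Set.exists_of_ssubset hT
  obtain ⟨x, hx⟩ := hC S hSC
  obtain ⟨S', hS'T, hxS'⟩ := hcov ▸ Set.mem_univ x
  exact hST (hx S' (hT.subset hS'T) hxS' ▸ hS'T)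

namespace Int

theorem two_pow_pred_dvd_of_modEq {n : ℤ} {i : ℕ} (h : n ≡ 2 ^ (i - 1) [ZMOD 2 ^ i]) :
    2 ^ (i - 1) ∣ n := by
  have h₁ : (2 : ℤ) ^ (i - 1) ∣ 2 ^ (i - 1) - n := (pow_dvd_pow 2 (Nat.sub_le i 1)).trans h.dvd
  simpa using (dvd_refl _).sub h₁

theorem not_two_pow_dvd_of_modEq {n : ℤ} {i : ℕ} (hi : 1 ≤ i)
    (h : n ≡ 2 ^ (i - 1) [ZMOD 2 ^ i]) : ¬ 2 ^ i ∣ n := by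
  intro hn
  have h₁ : (2 : ℤ) ^ i ∣ 2 ^ (i - 1) := by simpa using h.dvd.add hn
  have := (_root_.pow_dvd_pow_iff two_ne_zero (by norm_num [Int.isUnit_iff])).mp h₁
  omega

theorem eq_of_modEq_two_pow_pred {n : ℤ} {i i' : ℕ} (hi : 1 ≤ i) (hi' : 1 ≤ i')
    (h : n ≡ 2 ^ (i - 1) [ZMOD 2 ^ i]) (h' : n ≡ 2 ^ (i' - 1) [ZMOD 2 ^ i']) : i = i' := by
  have not_lt : ∀ {a b : ℕ}, 1 ≤ a → n ≡ 2 ^ (a - 1) [ZMOD 2 ^ a] →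
      n ≡ 2 ^ (b - 1) [ZMOD 2 ^ b] → ¬ a < b := fun ha ha' hb hab =>
    not_two_pow_dvd_of_modEq ha ha' <|
      (pow_dvd_pow 2 (by omega)).trans (two_pow_pred_dvd_of_modEq hb)
  have := not_lt hi h h'
  have := not_lt hi' h' h
  omega

theorem four_pow_modEq_one (m : ℕ) : (4 : ℤ) ^ m ≡ 1 [ZMOD 3] := by
  simpa using (show (4 : ℤ) ≡ 1 [ZMOD 3] by decide).pow m

theorem two_pow_pred_mul_modEq {i : ℕ} (hi : 1 ≤ i) :
    2 ^ (i - 1) * (2 ^ i + 3) ≡ 2 ^ (i - 1) [ZMOD 2 ^ i] ∧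
      2 ^ (i - 1) * (2 ^ i + 3) ≡ 2 [ZMOD 3] := by
  obtain ⟨m, rfl⟩ : ∃ m, i = m + 1 := ⟨i - 1, by omega⟩
  rw [Nat.add_sub_cancel]
  refine ⟨Int.modEq_iff_dvd.mpr ⟨-(2 ^ m + 1), by ring⟩, ?_⟩
  have h₄ := four_pow_modEq_one m
  have : (2 : ℤ) ^ m * (2 ^ (m + 1) + 3) = 2 * 4 ^ m + 3 * 2 ^ m := by
    rw [show (4 : ℤ) = 2 * 2 by norm_num, mul_pow]; ring
  unfold Int.ModEq at *
  omega

end Int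

section CoveringSystem

open Int

def coveringSystem (j : ℕ) : Set (Set ℤ) :=
  {S | ∃ i : ℕ, 1 ≤ i ∧ i ≤ j - 3 ∧ S = {n : ℤ | n ≡ 2 ^ (i - 1) [ZMOD 2 ^ i]}} ∪
    {S | ∃ k : ℕ, k ≤ 2 ∧
      S = {n : ℤ | n ≡ (k : ℤ) [ZMOD 3] ∧ n ≡ 0 [ZMOD 2 ^ (j - 5 + k)]}}

variable {j : ℕ}

theorem exists_private_point_dyadic (hj : 5 ≤ j) {i : ℕ} (hi : 1 ≤ i) (hij : i ≤ j - 3) :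
    ∃ n, ∀ S ∈ coveringSystem j, n ∈ S → S = {n : ℤ | n ≡ 2 ^ (i - 1) [ZMOD 2 ^ i]} := by
  obtain ⟨h₂, h₃⟩ := two_pow_pred_mul_modEq hi
  refine ⟨2 ^ (i - 1) * (2 ^ i + 3), ?_⟩
  rintro S (⟨i', hi', -, rfl⟩ | ⟨k, hk, rfl⟩) hn
  · rw [eq_of_modEq_two_pow_pred hi' hi hn h₂]
  · obtain ⟨hn₃, hn₂⟩ := hn
    obtain rfl : k = 2 := by
      unfold Int.ModEq at hn₃ h₃
      omega
    refine absurd ?_ (not_two_pow_dvd_of_modEq hi h₂)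
    exact (pow_dvd_pow 2 (by omega)).trans (modEq_zero_iff_dvd.mp hn₂)

theorem exists_private_point_ternary {k : ℕ} (hk : k ≤ 2) :
    ∃ n, ∀ S ∈ coveringSystem j,
      n ∈ S → S = {n : ℤ | n ≡ (k : ℤ) [ZMOD 3] ∧ n ≡ 0 [ZMOD 2 ^ (j - 5 + k)]} := by
  have h₃ : (k : ℤ) * 4 ^ j ≡ k [ZMOD 3] := by simpa using (four_pow_modEq_one j).mul_left k
  refine ⟨k * 4 ^ j, ?_⟩
  rintro S (⟨i, hi, hij, rfl⟩ | ⟨k', hk', rfl⟩) hn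
  · refine absurd (Dvd.dvd.mul_left ?_ _) (not_two_pow_dvd_of_modEq hi hn)
    exact (pow_dvd_pow 2 (by omega : i ≤ 2 * j)).trans (by rw [pow_mul]; norm_num)
  · have := hn.1.symm.trans h₃
    unfold Int.ModEq at this
    obtain rfl : k' = k := by omega
    rfl

end CoveringSystem

/-- For each `j ≥ 5`, the covering system consisting of the classes
`2^(i-1) mod 2^i` for `i = 1, ..., j-3` together with
`A_k = (k mod 3) ∩ (0 mod 2^(j-5+k))` for `k = 0, 1, 2` is minimal: no proper
subset of this set of congruence classes covers `ℤ`. -/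
theorem stmt1 (j : ℕ) (hj : 5 ≤ j)
    (C : Set (Set ℤ))
    (hC : C = {S | ∃ i : ℕ, 1 ≤ i ∧ i ≤ j - 3 ∧
                S = {n : ℤ | n ≡ 2 ^ (i - 1) [ZMOD 2 ^ i]}} ∪
              {S | ∃ k : ℕ, k ≤ 2 ∧
                S = {n : ℤ | n ≡ (k : ℤ) [ZMOD 3] ∧ n ≡ 0 [ZMOD 2 ^ (j - 5 + k)]}}) :
    ∀ T ⊂ C, ⋃₀ T ≠ Set.univ := by
  subst hC
  refine fun T hT => Set.sUnion_ne_univ_of_ssubset (C := coveringSystem j) ?_ hT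
  rintro S (⟨i, hi, hij, rfl⟩ | ⟨k, hk, rfl⟩)
  · exact exists_private_point_dyadic hj hi hij
  · exact exists_private_point_ternary hk
end

section
/- Suppose C = {r_1 mod q_1, ..., r_k mod q_k} is a minimal covering system of ℤ and 1 ≤ ℓ ≤ k. Assume the following property (Crittenden–Vanden Eynden): any collection of ℓ-1 arithmetic progressions that covers some interval of 2^{ℓ-1} consecutive integers covers all of ℤ. Then the set of congruence classes C_ℓ = {r_j - h mod q_j : ℓ ≤ j ≤ k, 0 ≤ h < 2^{ℓ-1}} is a covering system of ℤ. -/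
/-!
If some `n` lay in no class of `C_ℓ`, then no class `r_j mod q_j` with `j ≥ ℓ` could meet the
interval `[n, n + 2^(ℓ-1))`, because `x ≡ r_j` would give `n ≡ r_j - (x - n)`. So the first
`ℓ - 1` classes cover that interval, hence all of `ℤ` by Crittenden–Vanden Eynden, which
contradicts the minimality of `C` since the class `r_ℓ mod q_ℓ` is left out.
-/

namespace Int

variable {ι : Type*}

def IsCovering (s : Finset ι) (a : ι → ℤ) (d : ι → ℕ) : Prop :=
  ∀ n : ℤ, ∃ i ∈ s, n ≡ a i [ZMOD d i]

theorem IsCovering.exists_mem_modEq_of_forall_not_modEq_sub {s t : Finset ι} {a : ι → ℤ}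
    {d : ι → ℕ} (hs : IsCovering s a d) {n L : ℤ}
    (hn : ∀ i ∈ s, i ∉ t → ∀ h ∈ Finset.Ico 0 L, ¬ n ≡ a i - h [ZMOD d i]) :
    ∀ x ∈ Finset.Ico n (n + L), ∃ i ∈ t, x ≡ a i [ZMOD d i] := by
  intro x hx
  obtain ⟨i, his, hxi⟩ := hs x
  by_cases hit : i ∈ t
  · exact ⟨i, hit, hxi⟩
  · have hxn : x - n ∈ Finset.Ico 0 L := by
      rw [Finset.mem_Ico] at hx ⊢
      omega
    refine absurd ?_ (hn i his hit (x - n) hxn)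
    simpa using hxi.sub_right (x - n)

end Int

open Int in
theorem stmt3_general (k : ℕ) (q : ℕ → ℕ) (r : ℕ → ℤ)
    (hq : ∀ i ∈ Finset.Icc 1 k, 0 < q i)
    -- `C` is a covering system:
    (hcover : ∀ n : ℤ, ∃ i ∈ Finset.Icc 1 k, n ≡ r i [ZMOD q i])
    -- `C` is minimal: no proper subset of the congruence classes covers `ℤ`:
    (hmin : ∀ S ⊆ Finset.Icc 1 k, S ≠ Finset.Icc 1 k →
      ∃ n : ℤ, ∀ i ∈ S, ¬ n ≡ r i [ZMOD q i])
    (ℓ : ℕ) (hℓ : 1 ≤ ℓ) (hℓk : ℓ ≤ k)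
    -- Crittenden–Vanden Eynden: any collection of `ℓ-1` arithmetic progressions
    -- covering an interval of `2^(ℓ-1)` consecutive integers covers `ℤ`:
    (hCVE : ∀ (a : ℕ → ℤ) (d : ℕ → ℕ), (∀ i ∈ Finset.Icc 1 (ℓ - 1), 0 < d i) →
      (∃ m : ℤ, ∀ x ∈ Finset.Ico m (m + 2 ^ (ℓ - 1)),
        ∃ i ∈ Finset.Icc 1 (ℓ - 1), x ≡ a i [ZMOD d i]) →
      ∀ n : ℤ, ∃ i ∈ Finset.Icc 1 (ℓ - 1), n ≡ a i [ZMOD d i]) :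
    ∀ n : ℤ, ∃ i ∈ Finset.Icc ℓ k, ∃ h ∈ Finset.Ico 0 (2 ^ (ℓ - 1) : ℤ),
      n ≡ r i - h [ZMOD q i] := by
  by_contra! ⟨n, hn⟩
  have hsub : Finset.Icc 1 (ℓ - 1) ⊆ Finset.Icc 1 k := Finset.Icc_subset_Icc_right (by omega)
  have hne : Finset.Icc 1 (ℓ - 1) ≠ Finset.Icc 1 k := fun h => by
    have hmem : ℓ ∈ Finset.Icc 1 k := Finset.mem_Icc.mpr ⟨hℓ, hℓk⟩
    rw [← h, Finset.mem_Icc] at hmem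
    omega
  have hinterval : ∀ x ∈ Finset.Ico n (n + 2 ^ (ℓ - 1)),
      ∃ i ∈ Finset.Icc 1 (ℓ - 1), x ≡ r i [ZMOD q i] :=
    IsCovering.exists_mem_modEq_of_forall_not_modEq_sub hcover fun i hi hil =>
      hn i (by simp only [Finset.mem_Icc] at hi hil ⊢; omega)
  have hsmall : IsCovering (Finset.Icc 1 (ℓ - 1)) r q :=
    hCVE r q (fun i hi => hq i (hsub hi)) ⟨n, hinterval⟩
  obtain ⟨m, hm⟩ := hmin _ hsub hne
  obtain ⟨i, hi, hmi⟩ := hsmall m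
  exact hm i hi hmi

/-- If `C = {r_i mod q_i : 1 ≤ i ≤ k}` is a minimal covering system of `ℤ` and
`1 ≤ ℓ ≤ k`, then—assuming the Crittenden–Vanden Eynden property that any `ℓ-1`
arithmetic progressions covering an interval of `2^(ℓ-1)` consecutive integers
cover all of `ℤ`—the system
`C_ℓ = {r_i - h mod q_i : ℓ ≤ i ≤ k, 0 ≤ h < 2^(ℓ-1)}` covers `ℤ`. -/
theorem stmt3 (k : ℕ) (hk : 1 ≤ k) (q : ℕ → ℕ) (r : ℕ → ℤ)
    (hq : ∀ i ∈ Finset.Icc 1 k, 0 < q i)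
    -- `C` is a covering system:
    (hcover : ∀ n : ℤ, ∃ i ∈ Finset.Icc 1 k, n ≡ r i [ZMOD q i])
    -- `C` is minimal: no proper subset of the congruence classes covers `ℤ`:
    (hmin : ∀ S ⊆ Finset.Icc 1 k, S ≠ Finset.Icc 1 k →
      ∃ n : ℤ, ∀ i ∈ S, ¬ n ≡ r i [ZMOD q i])
    (ℓ : ℕ) (hℓ : 1 ≤ ℓ) (hℓk : ℓ ≤ k)
    -- Crittenden–Vanden Eynden: any collection of `ℓ-1` arithmetic progressions
    -- covering an interval of `2^(ℓ-1)` consecutive integers covers `ℤ`: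
    (hCVE : ∀ (a : ℕ → ℤ) (d : ℕ → ℕ), (∀ i ∈ Finset.Icc 1 (ℓ - 1), 0 < d i) →
      (∃ m : ℤ, ∀ x ∈ Finset.Ico m (m + 2 ^ (ℓ - 1)),
        ∃ i ∈ Finset.Icc 1 (ℓ - 1), x ≡ a i [ZMOD d i]) →
      ∀ n : ℤ, ∃ i ∈ Finset.Icc 1 (ℓ - 1), n ≡ a i [ZMOD d i]) :
    ∀ n : ℤ, ∃ i ∈ Finset.Icc ℓ k, ∃ h ∈ Finset.Ico 0 (2 ^ (ℓ - 1) : ℤ),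
      n ≡ r i - h [ZMOD q i] :=
  stmt3_general k q r hq hcover hmin ℓ hℓ hℓk hCVE
end

section
/- There is an absolute constant K such that for every positive integer Q whose prime factors are all at most y (with y ≥ 2), the sum over pairs of divisors g_1, g_2 of Q of 2^{ω(lcm(g_1,g_2))} / lcm(g_1, g_2) is at most K · (log y)^6. -/
/-!
Write `h n = 2 ^ ω(n) / n`. Since `ω(lcm) + ω(gcd) = ω(g₁) + ω(g₂)` and `lcm · gcd = g₁ g₂`,
`h (lcm g₁ g₂) = h g₁ · h g₂ · G / 2 ^ ω(G)` with `G = gcd g₁ g₂`, and `G = ∑_{d ∣ G} φ(d)` turns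
the last factor into at most `∑_{d ∣ g₁, d ∣ g₂} φ(d) / 2 ^ ω(d)`. Exchanging the order of summation
and using `h (d m) ≤ h d · h m` bounds the double sum by `S² ∑_{d ∣ Q} φ(d) 2 ^ ω(d) / d² ≤ S³`,
where `S = ∑_{d ∣ Q} h d`. As `h` is multiplicative, `S ≤ ∏_{p ∣ Q} (1 - 1/p)⁻²`. Finally
`∏_{p ≤ y} (1 - 1/p)⁻¹ ≪ log y` follows from `∑_{p ≤ y} 1/p ≤ log log y + O(1)`, which partial
summation derives from `∑_{p ≤ N} log p / p ≤ log N + log 4` (Legendre's formula for `N!` together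
with Chebyshev's bound `θ(N) ≤ N log 4`).
-/

open Finset Real

theorem ArithmeticFunction.IsMultiplicative.sum_divisors_eq_prod_primeFactors {R : Type*}
    [CommSemiring R] {f : ArithmeticFunction R} (hf : f.IsMultiplicative) {n : ℕ} (hn : n ≠ 0) :
    ∑ d ∈ n.divisors, f d =
      ∏ p ∈ n.primeFactors, ∑ i ∈ range (n.factorization p + 1), f (p ^ i) := by
  rw [← coe_zeta_mul_apply,
    (isMultiplicative_zeta.natCast.mul hf).multiplicative_factorization _ hn]
  exact prod_congr n.support_factorization fun p hp ↦ by
    dsimp only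
    rw [coe_zeta_mul_apply, Nat.sum_divisors_prime_pow (Nat.prime_of_mem_primeFactors hp)]

theorem Nat.primeFactors_lcm {a b : ℕ} (ha : a ≠ 0) (hb : b ≠ 0) :
    (a.lcm b).primeFactors = a.primeFactors ∪ b.primeFactors := by
  ext p
  simp only [Nat.mem_primeFactors, mem_union, ne_eq, ha, hb, Nat.lcm_ne_zero ha hb,
    not_false_eq_true, and_true]
  constructor
  · rintro ⟨hp, hd⟩
    exact (hp.dvd_mul.mp (hd.trans (Nat.lcm_dvd_mul a b))).imp (⟨hp, ·⟩) (⟨hp, ·⟩)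
  · rintro (⟨hp, hd⟩ | ⟨hp, hd⟩)
    exacts [⟨hp, hd.trans (Nat.dvd_lcm_left a b)⟩, ⟨hp, hd.trans (Nat.dvd_lcm_right a b)⟩]

noncomputable def twoPowOmegaDiv : ArithmeticFunction ℝ :=
  ⟨fun n ↦ 2 ^ n.primeFactors.card / n, by simp⟩

@[simp]
theorem twoPowOmegaDiv_apply (n : ℕ) : twoPowOmegaDiv n = 2 ^ n.primeFactors.card / n := rfl

theorem twoPowOmegaDiv_nonneg (n : ℕ) : 0 ≤ twoPowOmegaDiv n := by
  rw [twoPowOmegaDiv_apply]; positivity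

theorem isMultiplicative_twoPowOmegaDiv : twoPowOmegaDiv.IsMultiplicative := by
  refine ⟨by simp, fun {m n} hmn ↦ ?_⟩
  simp only [twoPowOmegaDiv_apply, hmn.primeFactors_mul,
    card_union_of_disjoint hmn.disjoint_primeFactors, pow_add, Nat.cast_mul, div_mul_div_comm]

theorem twoPowOmegaDiv_mul_le (m n : ℕ) :
    twoPowOmegaDiv (m * n) ≤ twoPowOmegaDiv m * twoPowOmegaDiv n := by
  rcases eq_or_ne m 0 with rfl | hm
  · simp
  rcases eq_or_ne n 0 with rfl | hn
  · simp
  simp only [twoPowOmegaDiv_apply, Nat.primeFactors_mul hm hn, Nat.cast_mul, div_mul_div_comm,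
    ← pow_add]
  gcongr
  · norm_num
  · exact card_union_le _ _

theorem twoPowOmegaDiv_lcm_mul_gcd (a b : ℕ) :
    twoPowOmegaDiv (a.lcm b) * twoPowOmegaDiv (a.gcd b) =
      twoPowOmegaDiv a * twoPowOmegaDiv b := by
  rcases eq_or_ne a 0 with rfl | ha
  · simp
  rcases eq_or_ne b 0 with rfl | hb
  · simp
  have hcard : (a.lcm b).primeFactors.card + (a.gcd b).primeFactors.card =
      a.primeFactors.card + b.primeFactors.card := by
    rw [Nat.primeFactors_lcm ha hb, Nat.primeFactors_gcd ha hb, card_union_add_card_inter]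
  have hprod : ((a.lcm b : ℕ) : ℝ) * (a.gcd b : ℕ) = a * b := by
    rw [mul_comm]; exact_mod_cast Nat.gcd_mul_lcm a b
  simp only [twoPowOmegaDiv_apply, div_mul_div_comm, ← pow_add, hcard, hprod]

theorem inv_twoPowOmegaDiv_le_sum_totient (n : ℕ) :
    (twoPowOmegaDiv n)⁻¹ ≤ ∑ d ∈ n.divisors, (d.totient : ℝ) / 2 ^ d.primeFactors.card := by
  rcases eq_or_ne n 0 with rfl | hn
  · simp
  calc (twoPowOmegaDiv n)⁻¹ = ∑ d ∈ n.divisors, (d.totient : ℝ) / 2 ^ n.primeFactors.card := by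
        rw [twoPowOmegaDiv_apply, inv_div, ← sum_div, ← Nat.cast_sum, Nat.sum_totient]
    _ ≤ _ := sum_le_sum fun d hd ↦ by
        gcongr
        · norm_num
        · exact Nat.primeFactors_mono (Nat.dvd_of_mem_divisors hd) hn

theorem twoPowOmegaDiv_lcm_le (a b : ℕ) :
    twoPowOmegaDiv (a.lcm b) ≤ twoPowOmegaDiv a * twoPowOmegaDiv b *
      ∑ d ∈ (a.gcd b).divisors, (d.totient : ℝ) / 2 ^ d.primeFactors.card := by
  rcases eq_or_ne a 0 with rfl | ha
  · simp
  rcases eq_or_ne b 0 with rfl | hb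
  · simp
  have hG : 0 < twoPowOmegaDiv (a.gcd b) := by
    rw [twoPowOmegaDiv_apply]
    have := Nat.gcd_pos_of_pos_left b (Nat.pos_of_ne_zero ha)
    positivity
  calc twoPowOmegaDiv (a.lcm b)
      = twoPowOmegaDiv a * twoPowOmegaDiv b * (twoPowOmegaDiv (a.gcd b))⁻¹ := by
        rw [← twoPowOmegaDiv_lcm_mul_gcd, mul_inv_cancel_right₀ hG.ne']
    _ ≤ _ := by
        gcongr
        · exact mul_nonneg (twoPowOmegaDiv_nonneg a) (twoPowOmegaDiv_nonneg b)
        · exact inv_twoPowOmegaDiv_le_sum_totient _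

theorem sum_twoPowOmegaDiv_prime_pow_le {p : ℕ} (hp : p.Prime) (k : ℕ) :
    ∑ i ∈ range (k + 1), twoPowOmegaDiv (p ^ i) ≤ ((1 - (p : ℝ)⁻¹)⁻¹) ^ 2 := by
  have hp2 : (2 : ℝ) ≤ p := by exact_mod_cast hp.two_le
  have hx : (p : ℝ)⁻¹ < 1 := inv_lt_one_of_one_lt₀ (by linarith)
  have hx0 : (0 : ℝ) ≤ (p : ℝ)⁻¹ := by positivity
  have hpow : ∀ i ∈ Ico 1 (k + 1), twoPowOmegaDiv (p ^ i) = 2 * (p : ℝ)⁻¹ ^ i := fun i hi ↦ by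
    rw [twoPowOmegaDiv_apply, Nat.primeFactors_prime_pow (by grind) hp]
    simp [div_eq_mul_inv]
  calc ∑ i ∈ range (k + 1), twoPowOmegaDiv (p ^ i)
      = 1 + 2 * ∑ i ∈ Ico 1 (k + 1), (p : ℝ)⁻¹ ^ i := by
        rw [range_eq_Ico, sum_eq_sum_Ico_succ_bot (Nat.succ_pos k), sum_congr rfl hpow, mul_sum]
        simp
    _ ≤ 1 + 2 * ((p : ℝ)⁻¹ ^ 1 / (1 - (p : ℝ)⁻¹)) := by
        gcongr; exact geom_sum_Ico_le_of_lt_one hx0 hx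
    _ ≤ ((1 - (p : ℝ)⁻¹)⁻¹) ^ 2 := by
        generalize (p : ℝ)⁻¹ = x at hx hx0
        have hx1 : 0 < 1 - x := by linarith
        have hprod : (1 + 2 * (x / (1 - x))) * (1 - x) ^ 2 = 1 - x ^ 2 := by field_simp; ring
        rw [pow_one, inv_pow, ← one_div, le_div_iff₀ (by positivity), hprod]
        nlinarith

theorem sum_divisors_twoPowOmegaDiv_le {n : ℕ} (hn : n ≠ 0) :
    ∑ d ∈ n.divisors, twoPowOmegaDiv d ≤ (∏ p ∈ n.primeFactors, (1 - (p : ℝ)⁻¹)⁻¹) ^ 2 := by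
  rw [isMultiplicative_twoPowOmegaDiv.sum_divisors_eq_prod_primeFactors hn, ← prod_pow]
  exact prod_le_prod (fun p _ ↦ sum_nonneg fun i _ ↦ twoPowOmegaDiv_nonneg _)
    fun p hp ↦ sum_twoPowOmegaDiv_prime_pow_le (Nat.prime_of_mem_primeFactors hp) _

theorem sum_filter_dvd_twoPowOmegaDiv_le (n d : ℕ) :
    ∑ g ∈ n.divisors with d ∣ g, twoPowOmegaDiv g ≤
      twoPowOmegaDiv d * ∑ m ∈ n.divisors, twoPowOmegaDiv m := by
  calc ∑ g ∈ n.divisors with d ∣ g, twoPowOmegaDiv g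
      = ∑ m ∈ {g ∈ n.divisors | d ∣ g}.image (· / d), twoPowOmegaDiv (d * m) := by
        rw [sum_image fun x hx y hy hxy ↦ ?_]
        · exact sum_congr rfl fun g hg ↦ by rw [Nat.mul_div_cancel' (mem_filter.mp hg).2]
        · rw [← Nat.mul_div_cancel' (mem_filter.mp hx).2,
            ← Nat.mul_div_cancel' (mem_filter.mp hy).2, hxy]
    _ ≤ ∑ m ∈ n.divisors, twoPowOmegaDiv (d * m) := by
        refine sum_le_sum_of_subset_of_nonneg (fun m hm ↦ ?_) fun m _ _ ↦ twoPowOmegaDiv_nonneg _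
        obtain ⟨g, hg, rfl⟩ := mem_image.mp hm
        obtain ⟨hgn, hdg⟩ := mem_filter.mp hg
        exact Nat.mem_divisors.mpr ⟨(Nat.div_dvd_of_dvd hdg).trans (Nat.dvd_of_mem_divisors hgn),
          (Nat.mem_divisors.mp hgn).2⟩
    _ ≤ twoPowOmegaDiv d * ∑ m ∈ n.divisors, twoPowOmegaDiv m := by
        rw [mul_sum]; exact sum_le_sum fun m _ ↦ twoPowOmegaDiv_mul_le d m

theorem totient_div_mul_twoPowOmegaDiv_sq_le (d : ℕ) :
    (d.totient : ℝ) / 2 ^ d.primeFactors.card * twoPowOmegaDiv d ^ 2 ≤ twoPowOmegaDiv d := by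
  rcases eq_or_ne d 0 with rfl | hd
  · simp
  have hφ : (d.totient : ℝ) ≤ d := by exact_mod_cast Nat.totient_le d
  have hd' : (0 : ℝ) < d := by positivity
  rw [twoPowOmegaDiv_apply]
  field_simp
  exact hφ

theorem Finset.sum_product_mul_sum_filter {α R : Type*} [CommSemiring R] (s : Finset α)
    (r : α → α → Prop) [DecidableRel r] (f w : α → R) :
    ∑ x ∈ s ×ˢ s, f x.1 * f x.2 * ∑ d ∈ s with r d x.1 ∧ r d x.2, w d =
      ∑ d ∈ s, w d * (∑ g ∈ s with r d g, f g) ^ 2 := by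
  calc ∑ x ∈ s ×ˢ s, f x.1 * f x.2 * ∑ d ∈ s with r d x.1 ∧ r d x.2, w d
      = ∑ x ∈ s, ∑ y ∈ s, ∑ d ∈ s,
          w d * ((if r d x then f x else 0) * (if r d y then f y else 0)) := by
        rw [sum_product]
        refine sum_congr rfl fun x _ ↦ sum_congr rfl fun y _ ↦ ?_
        rw [sum_filter, mul_sum]
        refine sum_congr rfl fun d _ ↦ ?_
        split_ifs <;> simp_all [mul_comm]
    _ = ∑ d ∈ s, ∑ x ∈ s, ∑ y ∈ s,
          w d * ((if r d x then f x else 0) * (if r d y then f y else 0)) := by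
        exact (sum_congr rfl fun x _ ↦ sum_comm).trans sum_comm
    _ = ∑ d ∈ s, w d * (∑ g ∈ s with r d g, f g) ^ 2 := by
        simp_rw [sum_filter, sq, sum_mul_sum, mul_sum]

theorem sum_twoPowOmegaDiv_lcm_le (n : ℕ) :
    ∑ x ∈ n.divisors ×ˢ n.divisors, twoPowOmegaDiv (x.1.lcm x.2) ≤
      (∑ d ∈ n.divisors, twoPowOmegaDiv d) ^ 3 := by
  set S := ∑ d ∈ n.divisors, twoPowOmegaDiv d
  set w : ℕ → ℝ := fun d ↦ (d.totient : ℝ) / 2 ^ d.primeFactors.card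
  have hh := twoPowOmegaDiv_nonneg
  calc ∑ x ∈ n.divisors ×ˢ n.divisors, twoPowOmegaDiv (x.1.lcm x.2)
      ≤ ∑ x ∈ n.divisors ×ˢ n.divisors, twoPowOmegaDiv x.1 * twoPowOmegaDiv x.2 *
          ∑ d ∈ n.divisors with d ∣ x.1 ∧ d ∣ x.2, w d := by
        refine sum_le_sum fun x hx ↦ (twoPowOmegaDiv_lcm_le _ _).trans ?_
        have hx1 := Nat.mem_divisors.mp (mem_product.mp hx).1
        gcongr
        · exact mul_nonneg (hh _) (hh _)
        intro d hd
        have hdvd := Nat.dvd_gcd_iff.mp (Nat.dvd_of_mem_divisors hd)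
        exact mem_filter.mpr ⟨Nat.mem_divisors.mpr ⟨hdvd.1.trans hx1.1, hx1.2⟩, hdvd⟩
    _ = ∑ d ∈ n.divisors, w d * (∑ g ∈ n.divisors with d ∣ g, twoPowOmegaDiv g) ^ 2 :=
        sum_product_mul_sum_filter _ _ _ _
    _ ≤ ∑ d ∈ n.divisors, w d * (twoPowOmegaDiv d * S) ^ 2 := by
        gcongr with d
        · exact sum_nonneg fun g _ ↦ hh g
        · exact sum_filter_dvd_twoPowOmegaDiv_le n d
    _ = S ^ 2 * ∑ d ∈ n.divisors, w d * twoPowOmegaDiv d ^ 2 := by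
        rw [mul_sum]; exact sum_congr rfl fun d _ ↦ by ring
    _ ≤ S ^ 2 * S := by
        gcongr
        exact sum_le_sum fun d _ ↦ totient_div_mul_twoPowOmegaDiv_sq_le d
    _ = S ^ 3 := by ring

theorem mul_inv_sub_inv_le_log_sub_log {t u v : ℝ} (hu : 0 < u) (huv : u ≤ v) (ht : t ≤ u) :
    t * (u⁻¹ - v⁻¹) ≤ log v - log u :=
  calc t * (u⁻¹ - v⁻¹)
      ≤ u * (u⁻¹ - v⁻¹) := mul_le_mul_of_nonneg_right ht (sub_nonneg.mpr (inv_anti₀ hu huv))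
    _ = 1 - (v / u)⁻¹ := by field_simp
    _ ≤ log (v / u) := one_sub_inv_le_log_of_pos (div_pos (hu.trans_le huv) hu)
    _ = log v - log u := log_div (hu.trans_le huv).ne' hu.ne'

theorem exists_sum_range_le_log_log_add {a : ℕ → ℝ} {c : ℝ}
    (ha : ∀ n, 2 ≤ n → ∑ k ∈ range (n + 1), a k * log k ≤ log n + c) :
    ∃ C, ∀ N, 2 ≤ N → ∑ k ∈ range (N + 1), a k ≤ log (log N) + C := by
  set D : ℕ → ℝ := fun n ↦ ∑ k ∈ range (n + 1), a k -
    (∑ k ∈ range (n + 1), a k * log k - c) / log n - log (log n) with hD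
  have hlog : ∀ n : ℕ, 2 ≤ n → 0 < log n := fun n hn ↦ log_pos (by exact_mod_cast hn)
  -- `D (n + 1) - D n = (A n - c) ((log n)⁻¹ - (log (n + 1))⁻¹) - (log log (n + 1) - log log n)`
  -- with `A n = ∑ k ≤ n, a k * log k`: the new term `a (n + 1)` cancels.
  have hstep : ∀ n, 2 ≤ n → D (n + 1) ≤ D n := fun n hn ↦ by
    have hlog1 : log n ≤ log (n + 1 : ℕ) := log_le_log (by positivity) (by simp)
    have key := mul_inv_sub_inv_le_log_sub_log (hlog n hn) hlog1
      (t := ∑ k ∈ range (n + 1), a k * log k - c) (by linarith [ha n hn])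
    simp only [hD, sum_range_succ _ (n + 1)]
    have hlog1' : log (n + 1 : ℕ) ≠ 0 := (hlog (n + 1) (by omega)).ne'
    rw [add_sub_right_comm _ (a (n + 1) * _), add_div, mul_div_cancel_right₀ _ hlog1',
      div_eq_mul_inv, div_eq_mul_inv]
    linarith [mul_sub (∑ k ∈ range (n + 1), a k * log k - c) (log n)⁻¹ (log (n + 1 : ℕ))⁻¹]
  have hD2 : ∀ N, 2 ≤ N → D N ≤ D 2 := fun N hN ↦ by
    induction N, hN using Nat.le_induction with
    | base => exact le_rfl
    | succ n hn ih => exact (hstep n hn).trans ih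
  refine ⟨D 2 + 1, fun N hN ↦ ?_⟩
  have hAN : (∑ k ∈ range (N + 1), a k * log k - c) / log N ≤ 1 :=
    div_le_one_of_le₀ (by linarith [ha N hN]) (hlog N hN).le
  have hDN : D N = ∑ k ∈ range (N + 1), a k -
      (∑ k ∈ range (N + 1), a k * log k - c) / log N - log (log N) := rfl
  linarith [hD2 N hN]

theorem log_factorial_le (n : ℕ) : log n.factorial ≤ n * log n := by
  rcases eq_or_ne n 0 with rfl | hn
  · simp
  rw [← log_pow]
  exact log_le_log (by positivity) (by exact_mod_cast Nat.factorial_le_pow n)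

theorem div_le_factorization_factorial {p : ℕ} (hp : p.Prime) (n : ℕ) :
    n / p ≤ n.factorial.factorization p := by
  rw [Nat.factorization_factorial hp (b := Nat.log p n + 2) (by omega)]
  simpa using single_le_sum (f := fun i ↦ n / p ^ i) (fun _ _ ↦ Nat.zero_le _)
    (show 1 ∈ Ico 1 (Nat.log p n + 2) by simp)

theorem sum_primesLE_div_mul_log_le_log_factorial (n : ℕ) :
    ∑ p ∈ Nat.primesLE n, ((n / p : ℕ) : ℝ) * log p ≤ log n.factorial := by
  rw [log_nat_eq_sum_factorization, Finsupp.sum, Nat.support_factorization]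
  calc ∑ p ∈ Nat.primesLE n, ((n / p : ℕ) : ℝ) * log p
      ≤ ∑ p ∈ Nat.primesLE n, (n.factorial.factorization p : ℝ) * log p := by
        refine sum_le_sum fun p hp ↦ ?_
        have hp := Nat.prime_of_mem_primesLE hp
        gcongr
        exact div_le_factorization_factorial hp n
    _ ≤ ∑ p ∈ n.factorial.primeFactors, (n.factorial.factorization p : ℝ) * log p := by
        refine sum_le_sum_of_subset_of_nonneg (fun p hp ↦ ?_) fun p hp _ ↦ ?_
        · obtain ⟨hpn, hp⟩ := Nat.mem_primesLE.mp hp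
          exact hp.mem_primeFactors (Nat.dvd_factorial hp.pos hpn) (Nat.factorial_ne_zero n)
        · have := (Nat.prime_of_mem_primeFactors hp).one_le
          positivity

theorem sum_primesLE_log_div_le (n : ℕ) : ∑ p ∈ Nat.primesLE n, log p / p ≤ log n + log 4 := by
  rcases eq_or_ne n 0 with rfl | hn
  · simp only [Nat.primesLE_zero, sum_empty, Nat.cast_zero, log_zero, zero_add]
    positivity
  have hn' : (0 : ℝ) < n := by positivity
  refine le_of_mul_le_mul_left ?_ hn'
  calc n * ∑ p ∈ Nat.primesLE n, log p / p = ∑ p ∈ Nat.primesLE n, (n : ℝ) / p * log p := by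
        rw [mul_sum]; exact sum_congr rfl fun p _ ↦ by ring
    _ ≤ ∑ p ∈ Nat.primesLE n, (((n / p : ℕ) : ℝ) + 1) * log p := by
        refine sum_le_sum fun p _ ↦ ?_
        gcongr
        rw [← Nat.floor_div_eq_div (K := ℝ)]
        exact (Nat.lt_floor_add_one _).le
    _ = ∑ p ∈ Nat.primesLE n, ((n / p : ℕ) : ℝ) * log p + Chebyshev.theta n := by
        rw [Chebyshev.theta_eq_sum_primesLE_log, ← sum_add_distrib]
        exact sum_congr rfl fun p _ ↦ by ring
    _ ≤ n * log n + log 4 * n :=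
        add_le_add ((sum_primesLE_div_mul_log_le_log_factorial n).trans (log_factorial_le n))
          (Chebyshev.theta_le_log4_mul_x hn'.le)
    _ = n * (log n + log 4) := by ring

theorem exists_sum_primesLE_inv_le :
    ∃ C, ∀ N, 2 ≤ N → ∑ p ∈ Nat.primesLE N, (p : ℝ)⁻¹ ≤ log (log N) + C := by
  have hsum (f : ℕ → ℝ) (N : ℕ) :
      ∑ p ∈ Nat.primesLE N, f p = ∑ k ∈ range (N + 1), if k.Prime then f k else 0 := by
    rw [Nat.primesLE_eq_filter_range, sum_filter]
  obtain ⟨C, hC⟩ := exists_sum_range_le_log_log_add (c := log 4)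
    (a := fun k ↦ if k.Prime then (k : ℝ)⁻¹ else 0) fun n _ ↦ by
      simpa only [hsum, ite_mul, zero_mul, div_eq_inv_mul] using sum_primesLE_log_div_le n
  exact ⟨C, fun N hN ↦ by simpa only [hsum] using hC N hN⟩

theorem inv_one_sub_le_exp {x : ℝ} (hx : x ≤ 1 / 2) :
    (1 - x)⁻¹ ≤ exp (x + 2 * x ^ 2) := by
  have hx1 : 0 < 1 - x := by linarith
  calc (1 - x)⁻¹ = x / (1 - x) + 1 := by field_simp; ring
    _ ≤ exp (x / (1 - x)) := add_one_le_exp _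
    _ ≤ exp (x + 2 * x ^ 2) := by
        gcongr
        rw [div_le_iff₀ hx1]
        nlinarith [sq_nonneg x]

theorem exists_prod_inv_one_sub_inv_le : ∃ C, 0 < C ∧ ∀ y : ℝ, 2 ≤ y → ∀ s : Finset ℕ,
    (∀ p ∈ s, p.Prime ∧ (p : ℝ) ≤ y) → ∏ p ∈ s, (1 - (p : ℝ)⁻¹)⁻¹ ≤ C * log y := by
  obtain ⟨C, hC⟩ := exists_sum_primesLE_inv_le
  refine ⟨exp (C + 4), exp_pos _, fun y hy s hs ↦ ?_⟩
  set N := ⌊y⌋₊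
  have hN : 2 ≤ N := Nat.le_floor (by exact_mod_cast hy)
  have hlogN : 0 < log N := log_pos (by exact_mod_cast hN)
  have hsN : s ⊆ Nat.primesLE N := fun p hp ↦
    Nat.mem_primesLE.mpr ⟨Nat.le_floor (hs p hp).2, (hs p hp).1⟩
  have hsq : ∑ p ∈ Nat.primesLE N, (p : ℝ)⁻¹ ^ 2 ≤ 2 := by
    calc ∑ p ∈ Nat.primesLE N, (p : ℝ)⁻¹ ^ 2 ≤ ∑ i ∈ Ioo 0 (N + 1), ((i : ℝ) ^ 2)⁻¹ := by
          simp only [inv_pow]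
          refine sum_le_sum_of_subset_of_nonneg (fun p hp ↦ ?_) fun _ _ _ ↦ by positivity
          have := Nat.mem_primesLE.mp hp
          simp only [mem_Ioo]
          exact ⟨this.2.pos, by omega⟩
      _ ≤ 2 := by simpa using sum_Ioo_inv_sq_le (α := ℝ) 0 (N + 1)
  calc ∏ p ∈ s, (1 - (p : ℝ)⁻¹)⁻¹ ≤ ∏ p ∈ s, exp ((p : ℝ)⁻¹ + 2 * (p : ℝ)⁻¹ ^ 2) := by
        refine prod_le_prod (fun p hp ↦ ?_) fun p hp ↦ ?_
        · have : (p : ℝ)⁻¹ < 1 := inv_lt_one_of_one_lt₀ (by exact_mod_cast (hs p hp).1.one_lt)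
          exact inv_nonneg.mpr (by linarith)
        · have : (2 : ℝ) ≤ p := by exact_mod_cast (hs p hp).1.two_le
          exact inv_one_sub_le_exp (by rw [one_div]; exact inv_anti₀ two_pos this)
    _ = exp (∑ p ∈ s, ((p : ℝ)⁻¹ + 2 * (p : ℝ)⁻¹ ^ 2)) := (exp_sum _ _).symm
    _ ≤ exp (∑ p ∈ Nat.primesLE N, ((p : ℝ)⁻¹ + 2 * (p : ℝ)⁻¹ ^ 2)) :=
        exp_le_exp.mpr (sum_le_sum_of_subset_of_nonneg hsN fun _ _ _ ↦ by positivity)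
    _ ≤ exp (log (log N) + (C + 4)) := by
        rw [sum_add_distrib, ← mul_sum]
        exact exp_le_exp.mpr (by linarith [hC N hN])
    _ = exp (C + 4) * log N := by rw [exp_add, exp_log hlogN, mul_comm]
    _ ≤ exp (C + 4) * log y := by
        gcongr
        exact Nat.floor_le (by linarith)

/-- There is an absolute constant `K` such that for every positive integer `Q`
whose prime factors are all at most `y` (with `y ≥ 2`),
`∑_{g₁, g₂ ∣ Q} 2^(ω(lcm(g₁,g₂))) / lcm(g₁,g₂) ≤ K (log y)^6`. -/
theorem stmt7 :
    ∃ K : ℝ, 0 < K ∧ ∀ (y : ℝ), 2 ≤ y → ∀ Q : ℕ, 0 < Q →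
      (∀ p ∈ Q.primeFactors, (p : ℝ) ≤ y) →
      ∑ g ∈ Q.divisors ×ˢ Q.divisors,
          (2 : ℝ) ^ (Nat.lcm g.1 g.2).primeFactors.card / (Nat.lcm g.1 g.2) ≤
        K * Real.log y ^ 6 := by
  obtain ⟨C, hC, hprod⟩ := exists_prod_inv_one_sub_inv_le
  refine ⟨C ^ 6, by positivity, fun y hy Q hQ hQy ↦ ?_⟩
  set M := ∏ p ∈ Q.primeFactors, (1 - (p : ℝ)⁻¹)⁻¹
  have hM0 : 0 ≤ M := prod_nonneg fun p hp ↦ inv_nonneg.mpr <| sub_nonneg.mpr <|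
    inv_le_one_of_one_le₀ (by exact_mod_cast (Nat.prime_of_mem_primeFactors hp).one_le)
  have hM : M ≤ C * log y :=
    hprod y hy _ fun p hp ↦ ⟨Nat.prime_of_mem_primeFactors hp, hQy p hp⟩
  calc ∑ g ∈ Q.divisors ×ˢ Q.divisors, twoPowOmegaDiv (g.1.lcm g.2)
      ≤ (∑ d ∈ Q.divisors, twoPowOmegaDiv d) ^ 3 := sum_twoPowOmegaDiv_lcm_le Q
    _ ≤ (M ^ 2) ^ 3 := by
        gcongr
        · exact sum_nonneg fun d _ ↦ twoPowOmegaDiv_nonneg d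
        · exact sum_divisors_twoPowOmegaDiv_le hQ.ne'
    _ ≤ ((C * log y) ^ 2) ^ 3 := by gcongr
    _ = C ^ 6 * log y ^ 6 := by ring
end

section
/- Let A be a finite set of congruence classes a_i mod d_i (i = 1, ..., n) with all d_i > 1, and suppose that for every modulus d, at most s of the classes have d_i = d (i.e., A has multiplicity at most s). Let x ∈ ℤ/Qℤ where Q = lcm(d_1, ..., d_n), let p be a prime, let Q' be the largest divisor of Q whose prime factors are all less than p, and let F(x) be the fiber of x under the projection ℤ/Qℤ → ℤ/Q'ℤ. Let B be the union over all i with largest prime factor of d_i equal to p of the residues mod Q lying in a_i mod d_i. Then |F(x) ∩ B|/|F(x)| ≤ ∑_{r≥1, p^r | Q} ∑_{g | Q'} ∑_{i : d_i = g·p^r} 1_{x ⊆ a_i + gℤ} / p^r. -/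
/-!
Write `dᵢ = gᵢ pʳⁱ` with `p ∤ gᵢ`. When `P⁺(dᵢ) = p`, every prime factor of `gᵢ` is below `p`, so
`gᵢ ∣ Q'`, while `pʳⁱ ∣ Q / Q'`. Inside the fiber of `c` the class `aᵢ mod dᵢ` is therefore empty
unless `c ≡ aᵢ (mod gᵢ)`, and otherwise lies in a single class mod `Q' pʳⁱ` (Chinese remainder
theorem), which occupies a proportion `p^{-rᵢ}` of the fiber. A union bound over `i` concludes.
-/

open Finset

namespace Nat

lemma dvd_of_primeFactors_sup_eq {d p : ℕ} (hp : p.Prime) (h : d.primeFactors.sup id = p) :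
    p ∣ d := by
  rcases d.primeFactors.eq_empty_or_nonempty with he | hne
  · rw [he, sup_empty, bot_eq_zero] at h
    exact absurd h.symm hp.ne_zero
  · obtain ⟨q, hq, hqp⟩ := exists_mem_eq_sup _ hne id
    rw [h, id] at hqp
    exact hqp ▸ dvd_of_mem_primeFactors hq

lemma ordCompl_dvd_of_primeFactors_sup_eq {d p Q Q' : ℕ} (hp : p.Prime)
    (hdp : d.primeFactors.sup id = p) (hQ : Q ≠ 0) (hdQ : d ∣ Q) (hQ'Q : Q' ∣ Q)
    (hQ'max : ∀ q ∈ (Q / Q').primeFactors, p ≤ q) :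
    d / p ^ d.factorization p ∣ Q' := by
  have hd : d ≠ 0 := ne_zero_of_dvd_ne_zero hQ hdQ
  have hcop : Coprime (d / p ^ d.factorization p) (Q / Q') := by
    refine coprime_of_dvd fun q hq hqg hqQ => ?_
    have hqp : q ≤ p := hdp ▸ le_sup (f := id)
      (mem_primeFactors.mpr ⟨hq, hqg.trans (ordCompl_dvd d p), hd⟩)
    have hpq : p ≤ q := hQ'max q <| mem_primeFactors.mpr
      ⟨hq, hqQ, (Nat.div_pos (le_of_dvd (pos_of_ne_zero hQ) hQ'Q)
        (pos_of_dvd_of_pos hQ'Q (pos_of_ne_zero hQ))).ne'⟩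
    exact not_dvd_ordCompl hp hd (le_antisymm hqp hpq ▸ hqg)
  refine hcop.dvd_of_dvd_mul_right ?_
  rw [Nat.mul_div_cancel' hQ'Q]
  exact (ordCompl_dvd d p).trans hdQ

lemma card_le_div_of_modEq {S : Finset ℕ} {Q L : ℕ} (hL : 0 < L) (hLQ : L ∣ Q)
    (hS : S ⊆ range Q) (hmod : ∀ x ∈ S, ∀ y ∈ S, x ≡ y [MOD L]) : #S ≤ Q / L := by
  rcases S.eq_empty_or_nonempty with rfl | ⟨v, hv⟩
  · simp
  calc #S ≤ #{x ∈ range Q | x ≡ v [MOD L]} :=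
        card_le_card fun x hx => mem_filter.mpr ⟨hS hx, hmod x hx v hv⟩
    _ = Q / L := by
        rw [← count_eq_card_filter_range, count_modEq_card _ hL, mod_eq_zero_of_dvd hLQ]
        simp

end Nat

lemma card_fiber_inter_class_le {Q Q' m d : ℕ} (hQ : Q ≠ 0) (hcop : Q'.Coprime m)
    (hdvd : Q' * m ∣ Q) (hmd : m ∣ d) (c a : ℤ) :
    #((range Q).filter fun x : ℕ => (x : ℤ) ≡ c [ZMOD Q'] ∧ (x : ℤ) ≡ a [ZMOD d]) ≤
      Q / (Q' * m) := by
  refine Nat.card_le_div_of_modEq (Nat.pos_of_dvd_of_pos hdvd (Nat.pos_of_ne_zero hQ)) hdvd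
    (filter_subset _ _) fun x hx y hy => ?_
  obtain ⟨-, hxc, hxa⟩ := mem_filter.mp hx
  obtain ⟨-, hyc, hya⟩ := mem_filter.mp hy
  have hQ' : x ≡ y [MOD Q'] := Int.natCast_modEq_iff.mp (hxc.trans hyc.symm)
  have hm : x ≡ y [MOD m] :=
    Int.natCast_modEq_iff.mp ((hxa.trans hya.symm).of_dvd (Int.natCast_dvd_natCast.mpr hmd))
  exact (Nat.modEq_and_modEq_iff_modEq_mul hcop).mp ⟨hQ', hm⟩

lemma fiber_inter_class_eq_empty {Q Q' g d : ℕ} {c a : ℤ} (hgQ' : g ∣ Q') (hgd : g ∣ d)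
    (hca : ¬ c ≡ a [ZMOD g]) :
    (range Q).filter (fun x : ℕ => (x : ℤ) ≡ c [ZMOD Q'] ∧ (x : ℤ) ≡ a [ZMOD d]) = ∅ :=
  filter_eq_empty_iff.mpr fun _ _ ⟨hxc, hxa⟩ => hca <|
    (hxc.of_dvd (Int.natCast_dvd_natCast.mpr hgQ')).symm.trans
      (hxa.of_dvd (Int.natCast_dvd_natCast.mpr hgd))

noncomputable def classWeight (Q Q' p d : ℕ) (c a : ℤ) : ℝ :=
  ∑ r ∈ Icc 1 (Q.factorization p), ∑ g ∈ Q'.divisors,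
    if d = g * p ^ r ∧ c ≡ a [ZMOD g] then 1 / (p : ℝ) ^ r else 0

lemma classWeight_nonneg (Q Q' p d : ℕ) (c a : ℤ) : 0 ≤ classWeight Q Q' p d c a :=
  sum_nonneg fun _ _ => sum_nonneg fun _ _ => by split_ifs <;> positivity

lemma one_div_pow_le_classWeight {Q Q' p d r g : ℕ} {c a : ℤ}
    (hr : r ∈ Icc 1 (Q.factorization p)) (hg : g ∈ Q'.divisors) (hd : d = g * p ^ r)
    (hca : c ≡ a [ZMOD g]) : 1 / (p : ℝ) ^ r ≤ classWeight Q Q' p d c a := by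
  have hterm_nonneg : ∀ r' g' : ℕ, (0 : ℝ) ≤
      if d = g' * p ^ r' ∧ c ≡ a [ZMOD g'] then 1 / (p : ℝ) ^ r' else 0 := fun _ _ => by
    split_ifs <;> positivity
  calc 1 / (p : ℝ) ^ r
      = if d = g * p ^ r ∧ c ≡ a [ZMOD g] then 1 / (p : ℝ) ^ r else 0 := by rw [if_pos ⟨hd, hca⟩]
    _ ≤ ∑ g' ∈ Q'.divisors, if d = g' * p ^ r ∧ c ≡ a [ZMOD g'] then 1 / (p : ℝ) ^ r else 0 :=
        single_le_sum (fun g' _ => hterm_nonneg r g') hg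
    _ ≤ classWeight Q Q' p d c a :=
        single_le_sum (fun r' _ => sum_nonneg fun g' _ => hterm_nonneg r' g') hr

lemma card_fiber_inter_class_div_le_classWeight {Q Q' p d : ℕ} (hp : p.Prime) (hQ : Q ≠ 0)
    (hdQ : d ∣ Q) (hQ'Q : Q' ∣ Q) (hQ'small : ∀ q ∈ Q'.primeFactors, q < p)
    (hQ'max : ∀ q ∈ (Q / Q').primeFactors, p ≤ q) (hdp : d.primeFactors.sup id = p) (c a : ℤ) :
    (#((range Q).filter fun x : ℕ => (x : ℤ) ≡ c [ZMOD Q'] ∧ (x : ℤ) ≡ a [ZMOD d]) : ℝ) /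
      (Q / Q' : ℕ) ≤ classWeight Q Q' p d c a := by
  have hd : d ≠ 0 := ne_zero_of_dvd_ne_zero hQ hdQ
  have hQ' : Q' ≠ 0 := ne_zero_of_dvd_ne_zero hQ hQ'Q
  set r := d.factorization p
  set g := d / p ^ r
  have hgQ' : g ∣ Q' := Nat.ordCompl_dvd_of_primeFactors_sup_eq hp hdp hQ hdQ hQ'Q hQ'max
  by_cases hca : c ≡ a [ZMOD g]
  swap
  · rw [fiber_inter_class_eq_empty hgQ' (Nat.ordCompl_dvd d p) hca, card_empty, Nat.cast_zero,
      zero_div]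
    exact classWeight_nonneg ..
  have hpQ' : ¬ p ∣ Q' := fun h =>
    (hQ'small p (Nat.mem_primeFactors.mpr ⟨hp, h, hQ'⟩)).false
  have hcop : Q'.Coprime (p ^ r) :=
    (Nat.coprime_comm.mp (hp.coprime_iff_not_dvd.mpr hpQ')).pow_right r
  have hQ'r : Q' * p ^ r ∣ Q := hcop.mul_dvd_of_dvd_of_dvd hQ'Q ((Nat.ordProj_dvd d p).trans hdQ)
  have hr : r ∈ Icc 1 (Q.factorization p) := mem_Icc.mpr
    ⟨hp.factorization_pos_of_dvd hd (Nat.dvd_of_primeFactors_sup_eq hp hdp),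
      (hp.pow_dvd_iff_le_factorization hQ).mp ((Nat.ordProj_dvd d p).trans hdQ)⟩
  refine le_trans ?_ (one_div_pow_le_classWeight hr (Nat.mem_divisors.mpr ⟨hgQ', hQ'⟩)
    (Nat.div_mul_cancel (Nat.ordProj_dvd d p)).symm hca)
  have hcount := card_fiber_inter_class_le hQ hcop hQ'r (Nat.ordProj_dvd d p) c a
  rw [← Nat.div_div_eq_div_mul, Nat.le_div_iff_mul_le (pow_pos hp.pos r)] at hcount
  have hQQ' : (0 : ℝ) < (Q / Q' : ℕ) := by
    exact_mod_cast Nat.div_pos (Nat.le_of_dvd (Nat.pos_of_ne_zero hQ) hQ'Q) (Nat.pos_of_ne_zero hQ')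
  rw [div_le_div_iff₀ hQQ' (pow_pos (Nat.cast_pos.mpr hp.pos) r), one_mul]
  exact_mod_cast hcount

theorem stmt16_general (n : ℕ) (d : Fin n → ℕ) (a : Fin n → ℤ)
    (Q : ℕ) (hQ : Q = univ.lcm d)
    (p : ℕ) (hp : p.Prime)
    (Q' : ℕ) (hQ'dvd : Q' ∣ Q)
    (hQ'small : ∀ q ∈ Q'.primeFactors, q < p)
    (hQ'max : ∀ q ∈ (Q / Q').primeFactors, p ≤ q)
    (c : ℤ) :
    (((Finset.range Q).filter (fun x : ℕ =>
        (x : ℤ) ≡ c [ZMOD Q'] ∧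
        ∃ i : Fin n, (d i).primeFactors.sup id = p ∧ (x : ℤ) ≡ a i [ZMOD d i])).card : ℝ) /
        ((Q / Q' : ℕ) : ℝ) ≤
      ∑ r ∈ Icc 1 (Q.factorization p), ∑ g ∈ Q'.divisors, ∑ i : Fin n,
        if d i = g * p ^ r ∧ c ≡ a i [ZMOD g] then 1 / (p : ℝ) ^ r else 0 := by
  rcases eq_or_ne Q 0 with rfl | hQ0
  · rw [range_zero, filter_empty, card_empty, Nat.cast_zero, zero_div]
    exact sum_nonneg fun _ _ => sum_nonneg fun _ _ => sum_nonneg fun _ _ => by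
      split_ifs <;> positivity
  set I := univ.filter fun i => (d i).primeFactors.sup id = p
  set T : Fin n → Finset ℕ := fun i =>
    (range Q).filter fun x : ℕ => (x : ℤ) ≡ c [ZMOD Q'] ∧ (x : ℤ) ≡ a i [ZMOD d i]
  have hcover : (range Q).filter (fun x : ℕ => (x : ℤ) ≡ c [ZMOD Q'] ∧
      ∃ i : Fin n, (d i).primeFactors.sup id = p ∧ (x : ℤ) ≡ a i [ZMOD d i]) ⊆ I.biUnion T := by
    intro x hx
    obtain ⟨hxQ, hxc, i, hip, hxa⟩ := mem_filter.mp hx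
    exact mem_biUnion.mpr ⟨i, mem_filter.mpr ⟨mem_univ i, hip⟩, mem_filter.mpr ⟨hxQ, hxc, hxa⟩⟩
  calc _ ≤ (∑ i ∈ I, (#(T i) : ℝ)) / (Q / Q' : ℕ) := by
        gcongr
        exact_mod_cast (card_le_card hcover).trans card_biUnion_le
    _ = ∑ i ∈ I, (#(T i) : ℝ) / (Q / Q' : ℕ) := sum_div ..
    _ ≤ ∑ i ∈ I, classWeight Q Q' p (d i) c (a i) := sum_le_sum fun i hi =>
        card_fiber_inter_class_div_le_classWeight hp hQ0 (hQ ▸ dvd_lcm (mem_univ i)) hQ'dvd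
          hQ'small hQ'max (mem_filter.mp hi).2 c (a i)
    _ ≤ ∑ i, classWeight Q Q' p (d i) c (a i) :=
        sum_le_sum_of_subset_of_nonneg (subset_univ I) fun i _ _ => classWeight_nonneg ..
    _ = _ := by
        simp only [classWeight]
        rw [sum_comm]
        exact sum_congr rfl fun _ _ => sum_comm

/-- Lemma on fibers: let `A = {a_i mod d_i}` with `d_i > 1` and multiplicity at
most `s`, `Q = lcm(d_1, ..., d_n)`, `p` a prime, `Q'` the largest divisor of `Q`
all of whose prime factors are `< p`, and `c ∈ ℤ` a representative of
`x ∈ ℤ/Qℤ`. Let `B` be the union of the classes `a_i mod d_i` over `i` with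
`P⁺(d_i) = p`. Then
`|F(x) ∩ B|/|F(x)| ≤ ∑_{r ≥ 1, p^r ∣ Q} ∑_{g ∣ Q'} ∑_{i : d_i = g p^r} 1_{x ⊆ a_i + gℤ}/p^r`,
where `|F(x)| = Q/Q'` and `F(x) ∩ B` is counted by residues mod `Q`. -/
theorem stmt16 (n s : ℕ) (d : Fin n → ℕ) (a : Fin n → ℤ)
    (hd : ∀ i, 1 < d i)
    (hmult : ∀ m : ℕ, (univ.filter (fun i => d i = m)).card ≤ s)
    (Q : ℕ) (hQ : Q = univ.lcm d)
    (p : ℕ) (hp : p.Prime)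
    (Q' : ℕ) (hQ'dvd : Q' ∣ Q)
    (hQ'small : ∀ q ∈ Q'.primeFactors, q < p)
    (hQ'max : ∀ q ∈ (Q / Q').primeFactors, p ≤ q)
    (c : ℤ) :
    (((Finset.range Q).filter (fun x : ℕ =>
        (x : ℤ) ≡ c [ZMOD Q'] ∧
        ∃ i : Fin n, (d i).primeFactors.sup id = p ∧ (x : ℤ) ≡ a i [ZMOD d i])).card : ℝ) /
        ((Q / Q' : ℕ) : ℝ) ≤
      ∑ r ∈ Icc 1 (Q.factorization p), ∑ g ∈ Q'.divisors, ∑ i : Fin n,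
        if d i = g * p ^ r ∧ c ≡ a i [ZMOD g] then 1 / (p : ℝ) ^ r else 0 :=
  stmt16_general n d a Q hQ p hp Q' hQ'dvd hQ'small hQ'max c
end

section
/- If s is a positive integer and c is sufficiently large (absolute), then with x = exp(c·log²(s+1)/log log(s+2)) and y = C·s³ for a suitable absolute constant C, one has u = log x / log y ≥ c'·log(s+1)/log log(s+2) for an absolute constant c' > 0, and s · ∑_{d > x, P⁺(d) ≤ y} 1/d < 1/2. -/
/-!
Rankin's trick: for `0 ≤ δ` every `d ≥ T` satisfies `1 / d ≤ T ^ (-δ) * d ^ (δ - 1)`, and the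
Euler product over the primes `p < N` bounds the sum of `d ^ (δ - 1)` over `N`-smooth `d` by
`∏ (1 - p ^ (δ - 1))⁻¹ ≤ exp (4 N ^ δ ∑_{p < N} 1 / p) ≤ exp (4 N ^ δ (4 log log N + 7))`,
the last step by Chebyshev's bound `∏_{p ≤ n} p ≤ 4 ^ n` on dyadic blocks of primes.
With `N = 2 s³ + 1` and `δ = log log (s + 2) / (2 log N)` we get `N ^ δ = √(log (s + 2))`, so the
loss in the exponent is `O(log s)`, while the gain `δ log x = c log² (s + 1) / (2 log N)` is at
least `c log (s + 1) / 10`; for `c ≥ 1300` this beats the factor `s` with room to spare.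
-/

open Finset Real

lemma card_primes_Ico_two_pow_mul_le (j : ℕ) :
    j * #{p ∈ Ico (2 ^ j) (2 ^ (j + 1)) | p.Prime} ≤ 2 ^ (j + 2) := by
  set B := {p ∈ Ico (2 ^ j) (2 ^ (j + 1)) | p.Prime}
  have hsub : B ⊆ {p ∈ range (2 ^ (j + 1) + 1) | p.Prime} :=
    filter_subset_filter _ fun p hp => mem_range.2 (by have := (mem_Ico.1 hp).2; omega)
  refine (Nat.pow_le_pow_iff_right one_lt_two).1 ?_
  calc 2 ^ (j * #B) = ∏ _p ∈ B, 2 ^ j := by rw [prod_const, pow_mul]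
    _ ≤ ∏ p ∈ B, p := prod_le_prod' fun p hp => (mem_Ico.1 (mem_filter.1 hp).1).1
    _ ≤ primorial (2 ^ (j + 1)) :=
      prod_le_prod_of_subset_of_one_le' hsub fun p hp _ => (mem_filter.1 hp).2.one_lt.le
    _ ≤ 4 ^ 2 ^ (j + 1) := primorial_le_four_pow _
    _ = 2 ^ 2 ^ (j + 2) := by rw [show 4 = 2 ^ 2 by rfl, ← pow_mul, pow_succ _ (j + 1)]; ring

lemma sum_one_div_primes_Ico_two_pow_le {j : ℕ} (hj : 1 ≤ j) :
    ∑ p ∈ Ico (2 ^ j : ℕ) (2 ^ (j + 1)) with p.Prime, (1 : ℝ) / p ≤ 4 / j := by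
  set B := {p ∈ Ico (2 ^ j) (2 ^ (j + 1)) | p.Prime}
  have hcard : (j : ℝ) * #B ≤ 4 * 2 ^ j := by
    exact_mod_cast (card_primes_Ico_two_pow_mul_le j).trans_eq (by ring)
  calc ∑ p ∈ B, (1 : ℝ) / p ≤ #B • (1 / 2 ^ j) := by
        refine sum_le_card_nsmul _ _ _ fun p hp => ?_
        gcongr
        exact_mod_cast (mem_Ico.1 (mem_filter.1 hp).1).1
    _ ≤ 4 / j := by
        rw [nsmul_eq_mul, mul_one_div, div_le_div_iff₀ (by positivity) (by positivity)]
        linarith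

lemma sum_one_div_primesBelow_two_pow_le (K : ℕ) :
    ∑ p ∈ (2 ^ (K + 1) : ℕ).primesBelow, (1 : ℝ) / p ≤ 4 * harmonic K := by
  induction K with
  | zero => simp [show Nat.primesBelow 2 = ∅ by decide]
  | succ K ih =>
    have hsplit := sum_Ico_consecutive (fun p => if p.Prime then (1 : ℝ) / p else 0)
      (Nat.zero_le (2 ^ (K + 1))) (Nat.pow_le_pow_right two_pos (by omega : K + 1 ≤ K + 1 + 1))
    simp only [← sum_filter, ← range_eq_Ico] at hsplit
    have hblock := sum_one_div_primes_Ico_two_pow_le (j := K + 1) (by omega)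
    rw [Nat.primesBelow] at ih ⊢
    rw [← hsplit, harmonic_succ]
    push_cast at hblock ⊢
    rw [div_eq_mul_inv] at hblock
    linarith

lemma sum_one_div_primesBelow_le {N : ℕ} (hN : 2 ≤ N) :
    ∑ p ∈ N.primesBelow, (1 : ℝ) / p ≤ 4 * log (log N) + 7 := by
  set K := Nat.log 2 N
  have hK : 1 ≤ K := Nat.le_log_of_pow_le one_lt_two (by simpa using hN)
  have hKN : (K : ℝ) * log 2 ≤ log N := by
    rw [← log_pow]
    exact log_le_log (by positivity) (by exact_mod_cast Nat.pow_log_le_self 2 (by omega))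
  have hlogK : log K ≤ log 2 + log (log N) := by
    have hlogN : 0 < log N := log_pos (by exact_mod_cast hN)
    rw [← log_mul two_ne_zero hlogN.ne']
    exact log_le_log (by positivity) (by nlinarith [log_two_gt_d9])
  calc ∑ p ∈ N.primesBelow, (1 : ℝ) / p
      ≤ ∑ p ∈ (2 ^ (K + 1) : ℕ).primesBelow, (1 : ℝ) / p :=
        sum_le_sum_of_subset_of_nonneg
          (Nat.primesBelow_mono (Nat.lt_pow_succ_log_self one_lt_two N).le)
          fun _ _ _ => by positivity
    _ ≤ 4 * (1 + log K) :=
        (sum_one_div_primesBelow_two_pow_le K).trans (by gcongr; exact harmonic_le_one_add_log K)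
    _ ≤ 4 * log (log N) + 7 := by linarith [log_two_lt_d9]

noncomputable def natRpowHom (r : ℝ) : ℕ →* ℝ where
  toFun n := (n : ℝ) ^ r
  map_one' := by simp
  map_mul' m n := by push_cast; exact mul_rpow (by positivity) (by positivity)

lemma sum_rpow_le_prod_primesBelow {N : ℕ} {r : ℝ} (hr : r < 0) {S : Finset ℕ}
    (hS : ∀ d ∈ S, d ∈ N.smoothNumbers) :
    ∑ d ∈ S, (d : ℝ) ^ r ≤ ∏ p ∈ N.primesBelow, (1 - (p : ℝ) ^ r)⁻¹ := by
  have hlt : ∀ {p : ℕ}, p.Prime → ‖natRpowHom r p‖ < 1 := fun {p} hp => by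
    have hp1 : (1 : ℝ) < p := by exact_mod_cast hp.one_lt
    change ‖(p : ℝ) ^ r‖ < 1
    rw [norm_of_nonneg (rpow_nonneg (by positivity) r)]
    exact rpow_lt_one_of_one_lt_of_neg hp1 hr
  have hsum := (EulerProduct.summable_and_hasSum_smoothNumbers_prod_primesBelow_geometric hlt N).2
  rw [← sum_subtype_of_mem _ hS]
  exact sum_le_hasSum _ (fun _ _ => rpow_nonneg (by positivity) r) hsum

lemma one_sub_inv_le_exp {t : ℝ} (h0 : 0 ≤ t) (h1 : t ≤ 3 / 4) : (1 - t)⁻¹ ≤ exp (4 * t) := by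
  rw [inv_le_iff_one_le_mul₀ (by linarith)]
  nlinarith [add_one_le_exp (4 * t)]

lemma rpow_sub_one_le_three_quarters {x δ : ℝ} (hx : 2 ≤ x) (hδ : δ ≤ 1 / 2) :
    x ^ (δ - 1) ≤ 3 / 4 := by
  have hx0 : 0 ≤ x := by linarith
  have hsq : (x ^ (-(1 / 2) : ℝ)) ^ 2 = x⁻¹ := by
    rw [← rpow_natCast, ← rpow_mul hx0]
    norm_num [rpow_neg_one]
  have hinv : x⁻¹ ≤ 1 / 2 := by rw [inv_eq_one_div]; exact one_div_le_one_div_of_le two_pos hx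
  calc x ^ (δ - 1) ≤ x ^ (-(1 / 2) : ℝ) := rpow_le_rpow_of_exponent_le (by linarith) (by linarith)
    _ ≤ 3 / 4 := by nlinarith [rpow_nonneg hx0 (-(1 / 2) : ℝ)]

lemma prod_primesBelow_inv_one_sub_rpow_le (N : ℕ) {δ : ℝ} (hδ0 : 0 ≤ δ) (hδ : δ ≤ 1 / 2) :
    ∏ p ∈ N.primesBelow, (1 - (p : ℝ) ^ (δ - 1))⁻¹ ≤
      exp (4 * N ^ δ * ∑ p ∈ N.primesBelow, (1 : ℝ) / p) := by
  have hp2 : ∀ p ∈ N.primesBelow, (2 : ℝ) ≤ p := fun p hp => by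
    exact_mod_cast Nat.two_le_of_mem_primesBelow hp
  calc ∏ p ∈ N.primesBelow, (1 - (p : ℝ) ^ (δ - 1))⁻¹
      ≤ ∏ p ∈ N.primesBelow, exp (4 * (p : ℝ) ^ (δ - 1)) := by
        refine prod_le_prod (fun p hp => ?_) fun p hp => ?_
        · have := rpow_sub_one_le_three_quarters (hp2 p hp) hδ
          exact inv_nonneg.2 (by linarith)
        · exact one_sub_inv_le_exp (rpow_nonneg (by linarith [hp2 p hp]) _)
            (rpow_sub_one_le_three_quarters (hp2 p hp) hδ)
    _ = exp (∑ p ∈ N.primesBelow, 4 * (p : ℝ) ^ (δ - 1)) := (exp_sum _ _).symm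
    _ ≤ exp (4 * N ^ δ * ∑ p ∈ N.primesBelow, (1 : ℝ) / p) := by
        rw [mul_sum]
        refine exp_le_exp.2 (sum_le_sum fun p hp => ?_)
        have hp0 : (0 : ℝ) < p := by linarith [hp2 p hp]
        rw [rpow_sub_one hp0.ne', mul_one_div, ← mul_div_assoc]
        gcongr
        exact_mod_cast (Nat.lt_of_mem_primesBelow hp).le

lemma sum_one_div_le_rpow_neg_mul_sum_rpow {S : Finset ℕ} {T δ : ℝ} (hT : 0 < T) (hδ : 0 ≤ δ)
    (hS : ∀ d ∈ S, T ≤ d) :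
    ∑ d ∈ S, (1 : ℝ) / d ≤ T ^ (-δ) * ∑ d ∈ S, (d : ℝ) ^ (δ - 1) := by
  rw [mul_sum]
  refine sum_le_sum fun d hd => ?_
  have hd0 : (0 : ℝ) < d := hT.trans_le (hS d hd)
  calc (1 : ℝ) / d = (d : ℝ) ^ (-δ) * (d : ℝ) ^ (δ - 1) := by
        rw [← rpow_add hd0, show -δ + (δ - 1) = -1 by ring, rpow_neg_one, one_div]
    _ ≤ T ^ (-δ) * (d : ℝ) ^ (δ - 1) := by
        have := rpow_le_rpow_of_nonpos hT (hS d hd) (neg_nonpos.2 hδ)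
        gcongr

lemma sum_one_div_smoothNumbers_le {N : ℕ} (hN : 2 ≤ N) {S : Finset ℕ} {T δ : ℝ} (hT : 0 < T)
    (hδ0 : 0 ≤ δ) (hδ : δ ≤ 1 / 2) (hS : ∀ d ∈ S, d ∈ N.smoothNumbers ∧ T ≤ d) :
    ∑ d ∈ S, (1 : ℝ) / d ≤ T ^ (-δ) * exp (4 * N ^ δ * (4 * log (log N) + 7)) :=
  calc ∑ d ∈ S, (1 : ℝ) / d ≤ T ^ (-δ) * ∑ d ∈ S, (d : ℝ) ^ (δ - 1) :=
        sum_one_div_le_rpow_neg_mul_sum_rpow hT hδ0 fun d hd => (hS d hd).2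
    _ ≤ T ^ (-δ) * ∏ p ∈ N.primesBelow, (1 - (p : ℝ) ^ (δ - 1))⁻¹ := by
        gcongr
        exact sum_rpow_le_prod_primesBelow (by linarith) fun d hd => (hS d hd).1
    _ ≤ T ^ (-δ) * exp (4 * N ^ δ * ∑ p ∈ N.primesBelow, (1 : ℝ) / p) := by
        gcongr
        exact prod_primesBelow_inv_one_sub_rpow_le N hδ0 hδ
    _ ≤ T ^ (-δ) * exp (4 * N ^ δ * (4 * log (log N) + 7)) := by
        gcongr
        exact sum_one_div_primesBelow_le hN

lemma log_add_two_le_two_mul_log_add_one {x : ℝ} (hx : 1 ≤ x) :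
    log (x + 2) ≤ 2 * log (x + 1) :=
  calc log (x + 2) ≤ log ((x + 1) ^ 2) := log_le_log (by linarith) (by nlinarith)
    _ = 2 * log (x + 1) := by rw [log_pow]; norm_num

lemma log_two_mul_pow_three_add_one_le {x : ℝ} (hx : 0 ≤ x) :
    log (2 * x ^ 3 + 1) ≤ 5 * log (x + 1) :=
  calc log (2 * x ^ 3 + 1) ≤ log ((x + 1) ^ 5) := by
        refine log_le_log (by positivity) ?_
        have : 0 ≤ x ^ 5 + 5 * x ^ 4 + 8 * x ^ 3 + 10 * x ^ 2 + 5 * x := by positivity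
        nlinarith
    _ = 5 * log (x + 1) := by rw [log_pow]; norm_num

lemma one_lt_log_add_two {x : ℝ} (hx : 1 ≤ x) : 1 < log (x + 2) := by
  rw [lt_log_iff_exp_lt (by linarith)]
  linarith [exp_one_lt_d9]

lemma log_log_two_mul_pow_three_add_one_le {x : ℝ} (hx : 1 ≤ x) :
    log (log (2 * x ^ 3 + 1)) ≤ log (log (x + 2)) + 2 := by
  have hlog5 : log 5 ≤ 2 := by
    rw [log_le_iff_le_exp (by norm_num), show (2 : ℝ) = 1 + 1 by norm_num, exp_add]
    nlinarith [exp_one_gt_d9]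
  have hA : 0 < log (x + 1) := log_pos (by linarith)
  calc log (log (2 * x ^ 3 + 1)) ≤ log (5 * log (x + 1)) :=
        log_le_log (log_pos (by nlinarith [one_le_pow₀ (n := 3) hx]))
          (log_two_mul_pow_three_add_one_le (by linarith))
    _ = log 5 + log (log (x + 1)) := log_mul (by norm_num) hA.ne'
    _ ≤ 2 + log (log (x + 2)) :=
        add_le_add hlog5 (log_le_log hA (log_le_log (by linarith) (by linarith)))
    _ = log (log (x + 2)) + 2 := add_comm _ _

lemma log_log_add_two_le_log_two_mul_pow_three_add_one {x : ℝ} (hx : 1 ≤ x) :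
    log (log (x + 2)) ≤ log (2 * x ^ 3 + 1) :=
  calc log (log (x + 2)) ≤ log (x + 2) := log_le_self (log_nonneg (by linarith))
    _ ≤ log (2 * x ^ 3 + 1) :=
        log_le_log (by linarith) (by nlinarith [pow_le_pow_right₀ hx (show 1 ≤ 3 by norm_num)])

lemma mul_exp_rankin_lt_half {s A E L c : ℝ} (hs : 0 < s) (hsA : log s ≤ A) (h2A : log 2 ≤ A)
    (hE : 0 < E) (hEA : exp E ≤ 2 * A) (hL : 0 < L) (hLA : L ≤ 5 * A) (hc : 1300 ≤ c) :
    s * (exp (-(E / (2 * L) * (c * A ^ 2 / E))) * exp (4 * exp (E / 2) * (4 * (E + 2) + 7)))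
      < 1 / 2 := by
  have hA : 0 < A := (log_pos one_lt_two).trans_le h2A
  have hgain : c * A / 10 ≤ E / (2 * L) * (c * A ^ 2 / E) := by
    rw [show E / (2 * L) * (c * A ^ 2 / E) = c * A * A / (2 * L) by field_simp,
      div_le_div_iff₀ (by norm_num) (by positivity)]
    nlinarith [mul_le_mul_of_nonneg_left (by linarith : 2 * L ≤ 10 * A) (by positivity : 0 ≤ c * A)]
  have hcost : 4 * exp (E / 2) * (4 * (E + 2) + 7) ≤ 120 * A := by
    have hexp : exp (E / 2) * exp (E / 2) = exp E := by rw [← exp_add, add_halves]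
    nlinarith [add_one_le_exp (E / 2), exp_pos (E / 2)]
  calc s * (exp (-(E / (2 * L) * (c * A ^ 2 / E))) * exp (4 * exp (E / 2) * (4 * (E + 2) + 7)))
      = exp (log s - E / (2 * L) * (c * A ^ 2 / E) + 4 * exp (E / 2) * (4 * (E + 2) + 7)) := by
        rw [exp_add, exp_sub, exp_log hs, exp_neg]; ring
    _ < exp (-log 2) := exp_lt_exp.2 (by nlinarith)
    _ = 1 / 2 := by rw [exp_neg, exp_log two_pos, one_div]

lemma log_add_one_div_log_log_add_two_le {s c : ℝ} (hs : 1 ≤ s) (hc : 5 ≤ c) :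
    log (s + 1) / log (log (s + 2)) ≤
      c * log (s + 1) ^ 2 / log (log (s + 2)) / log (2 * s ^ 3) := by
  have hA : 0 < log (s + 1) := log_pos (by linarith)
  have hy0 : 0 < log (2 * s ^ 3) := log_pos (by nlinarith [one_le_pow₀ (n := 3) hs])
  have hyA : log (2 * s ^ 3) ≤ 5 * log (s + 1) :=
    (log_le_log (by positivity) (by linarith)).trans
      (log_two_mul_pow_three_add_one_le (by linarith))
  rw [le_div_iff₀ hy0, div_mul_eq_mul_div,
    div_le_div_iff_of_pos_right (log_pos (one_lt_log_add_two hs))]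
  nlinarith [mul_le_mul_of_nonneg_left hyA hA.le]

lemma mul_sum_one_div_lt_half {s : ℕ} (hs : 1 ≤ s) {c : ℝ} (hc : 1300 ≤ c) {S : Finset ℕ}
    (hS : ∀ d ∈ S, exp (c * log (s + 1) ^ 2 / log (log (s + 2))) < d ∧
      ∀ p : ℕ, p.Prime → p ∣ d → (p : ℝ) ≤ 2 * (s : ℝ) ^ 3) :
    (s : ℝ) * ∑ d ∈ S, (1 : ℝ) / d < 1 / 2 := by
  have hs1 : (1 : ℝ) ≤ s := by exact_mod_cast hs
  set A := log ((s : ℝ) + 1)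
  set E := log (log ((s : ℝ) + 2))
  set L := log (2 * (s : ℝ) ^ 3 + 1)
  have hE : 0 < E := log_pos (one_lt_log_add_two hs1)
  have hEL : E ≤ L := log_log_add_two_le_log_two_mul_pow_three_add_one hs1
  have hL : 0 < L := hE.trans_le hEL
  have hsmooth : ∀ d ∈ S, d ∈ (2 * s ^ 3 + 1).smoothNumbers ∧ exp (c * A ^ 2 / E) ≤ d :=
    fun d hd => ⟨Nat.mem_smoothNumbers'.2 fun p hp hpd =>
      Nat.lt_succ_of_le (by exact_mod_cast (hS d hd).2 p hp hpd), (hS d hd).1.le⟩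
  have hrankin := sum_one_div_smoothNumbers_le (δ := E / (2 * L))
    (by have := Nat.one_le_pow 3 s hs; omega) (exp_pos _) (by positivity)
    (by rw [div_le_iff₀ (by positivity)]; linarith) hsmooth
  push_cast at hrankin
  have hTδ : exp (c * A ^ 2 / E) ^ (-(E / (2 * L))) = exp (-(E / (2 * L) * (c * A ^ 2 / E))) := by
    rw [← exp_mul]; ring_nf
  have hNδ : (2 * (s : ℝ) ^ 3 + 1) ^ (E / (2 * L)) = exp (E / 2) := by
    rw [rpow_def_of_pos (by positivity)]
    change exp (L * (E / (2 * L))) = _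
    field_simp
  have hEA : exp E ≤ 2 * A := by
    rw [exp_log (by linarith [one_lt_log_add_two hs1])]
    exact log_add_two_le_two_mul_log_add_one hs1
  rw [hTδ, hNδ] at hrankin
  calc (s : ℝ) * ∑ d ∈ S, (1 : ℝ) / d
      ≤ s * (exp (-(E / (2 * L) * (c * A ^ 2 / E))) *
          exp (4 * exp (E / 2) * (4 * (E + 2) + 7))) := by
        gcongr
        exact hrankin.trans (by gcongr; exact log_log_two_mul_pow_three_add_one_le hs1)
    _ < 1 / 2 :=
        mul_exp_rankin_lt_half (by positivity) (log_le_log (by positivity) (by linarith))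
          (log_le_log two_pos (by linarith)) hE hEA hL
          (log_two_mul_pow_three_add_one_le (by linarith)) hc

/-- There are absolute constants `C, c' > 0` and a threshold `c₀` such that for
all `c ≥ c₀` and every positive integer `s`, setting
`x = exp(c log²(s+1)/log log(s+2))` and `y = C s³`, one has
`u = log x / log y ≥ c' log(s+1)/log log(s+2)`, and
`s ∑_{d > x, P⁺(d) ≤ y} 1/d < 1/2` (the sum over `y`-smooth integers `d > x`
being expressed via all of its finite partial sums). -/
theorem stmt17 :
    ∃ C : ℝ, 0 < C ∧ ∃ c' : ℝ, 0 < c' ∧ ∃ c₀ : ℝ, ∀ c : ℝ, c₀ ≤ c →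
      ∀ s : ℕ, 1 ≤ s →
        (Real.log (Real.exp (c * Real.log (s + 1) ^ 2 / Real.log (Real.log (s + 2)))) /
            Real.log (C * (s : ℝ) ^ 3) ≥
          c' * Real.log (s + 1) / Real.log (Real.log (s + 2))) ∧
        ∀ S : Finset ℕ,
          (∀ d ∈ S, Real.exp (c * Real.log (s + 1) ^ 2 / Real.log (Real.log (s + 2))) < d ∧
            ∀ p : ℕ, p.Prime → p ∣ d → (p : ℝ) ≤ C * (s : ℝ) ^ 3) →
          (s : ℝ) * ∑ d ∈ S, (1 : ℝ) / d < 1 / 2 := by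
  refine ⟨2, two_pos, 1, one_pos, 1300, fun c hc s hs => ⟨?_, fun S hS => ?_⟩⟩
  · rw [log_exp, one_mul]
    exact log_add_one_div_log_log_add_two_le (by exact_mod_cast hs) (by linarith)
  · exact mul_sum_one_div_lt_half hs hc hS
end
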